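/- arXiv:2512.10580 — 4 statements merged into one kernel-verified Lean document; each statement's English description precedes it below -/
import Mathlib

section
/- Let n : ℕ and let S : Fin n → Fin n → Prop be a decidable sparsity pattern. Let P be the n × n matrix over the multivariate polynomial ring ℝ[X_{(i,j)} : (i,j) ∈ Fin n × Fin n] whose (i,j) entry is the indeterminate X_{(i,j)} if S i j holds and 0 otherwise. Then det P ≠ 0 (as a polynomial) if and only if there exists a permutation σ of Fin n such that S i (σ i) holds for every i. -/
/-!
If no permutation fits the pattern, every term of the Leibniz expansion of the determinant
contains a zero entry. Conversely, if `σ` fits the pattern, substituting `1` for the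
indeterminates `X (i, σ i)` and `0` for all others turns the generic matrix into the permutation
matrix of `σ`, whose determinant `sign σ = ±1` is nonzero; hence so is the polynomial.
-/

open MvPolynomial

namespace Matrix

variable {n R : Type*} [CommRing R]

theorem det_eq_zero_of_forall_perm_exists_apply_eq_zero [Fintype n] [DecidableEq n]
    (M : Matrix n n R) (h : ∀ σ : Equiv.Perm n, ∃ i, M i (σ i) = 0) : M.det = 0 := by
  rw [← det_transpose, det_apply]
  refine Finset.sum_eq_zero fun σ _ => ?_
  obtain ⟨i, hi⟩ := h σ
  rw [Finset.prod_eq_zero (Finset.mem_univ i) hi, smul_zero]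

noncomputable def genericOfPattern (S : n → n → Prop) [∀ i j, Decidable (S i j)] :
    Matrix n n (MvPolynomial (n × n) R) :=
  of fun i j => if S i j then X (i, j) else 0

variable (S : n → n → Prop) [∀ i j, Decidable (S i j)]

theorem det_genericOfPattern_eq_zero [Fintype n] [DecidableEq n]
    (hS : ∀ σ : Equiv.Perm n, ∃ i, ¬S i (σ i)) :
    (genericOfPattern (R := R) S).det = 0 :=
  det_eq_zero_of_forall_perm_exists_apply_eq_zero _ fun σ =>
    (hS σ).imp fun i hi => by simp [genericOfPattern, hi]

theorem map_eval_genericOfPattern_eq_permMatrix [DecidableEq n] {σ : Equiv.Perm n}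
    (hσ : ∀ i, S i (σ i)) :
    (genericOfPattern (R := R) S).map (eval fun p => if p.2 = σ p.1 then 1 else 0) =
      σ.permMatrix R := by
  ext i j
  by_cases hj : j = σ i
  · subst hj
    simp [genericOfPattern, hσ i]
  · simp [genericOfPattern, hj, Ne.symm hj, PEquiv.toMatrix_apply, apply_ite (eval _)]

theorem det_genericOfPattern_ne_zero [Fintype n] [DecidableEq n] [Nontrivial R]
    {σ : Equiv.Perm n} (hσ : ∀ i, S i (σ i)) :
    (genericOfPattern (R := R) S).det ≠ 0 := by
  intro hdet
  have hsign := congrArg (eval fun p : n × n => if p.2 = σ p.1 then (1 : R) else 0) hdet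
  rw [RingHom.map_det, RingHom.mapMatrix_apply, map_eval_genericOfPattern_eq_permMatrix S hσ,
    det_permutation, map_zero] at hsign
  exact (σ.sign.isUnit.map (Int.castRingHom R)).ne_zero hsign

theorem det_genericOfPattern_ne_zero_iff [Fintype n] [DecidableEq n] [Nontrivial R] :
    (genericOfPattern (R := R) S).det ≠ 0 ↔ ∃ σ : Equiv.Perm n, ∀ i, S i (σ i) := by
  constructor
  · intro hdet
    by_contra! hS
    exact hdet (det_genericOfPattern_eq_zero S hS)
  · rintro ⟨σ, hσ⟩
    exact det_genericOfPattern_ne_zero S hσ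

end Matrix

/-- Structural nonsingularity of a sparsity pattern is equivalent to generic
(polynomial) nonvanishing of the determinant: the determinant of the matrix of
indeterminates with pattern `S` is a nonzero polynomial iff the bipartite incidence
graph of `S` admits a perfect matching. -/
theorem generic_det_ne_zero_iff_matching {n : ℕ}
    (S : Fin n → Fin n → Prop) [∀ i j, Decidable (S i j)] :
    (Matrix.of fun i j =>
        if S i j then (MvPolynomial.X (i, j) : MvPolynomial (Fin n × Fin n) ℝ) else 0).det ≠ 0 ↔
      ∃ σ : Equiv.Perm (Fin n), ∀ i, S i (σ i) :=
  Matrix.det_genericOfPattern_ne_zero_iff S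
end

section
/- Let n : ℕ and let S : Fin n → Fin n → Prop be a decidable sparsity pattern such that there exists a permutation σ of Fin n with S i (σ i) for every i. Then the set of assignments v : (Fin n × Fin n) → ℝ for which the matrix with (i,j) entry equal to v(i,j) if S i j and 0 otherwise has zero determinant, is a Lebesgue-null set (has measure zero for the product Lebesgue measure on (Fin n × Fin n) → ℝ). -/
/-!
The singular assignments form the zero set of the polynomial `det (patternMatrix S X)` in the
entries. This polynomial is nonzero: at the 0/1 indicator of the graph of a matching `σ` it
evaluates to `det` of the permutation matrix of `σ`, which is `±1`. The zero set of a nonzero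
real polynomial is Lebesgue-null, by induction on the number of variables and Fubini: away from
the (null) zero set of the leading coefficient in the first variable, each one-variable slice is
the root set of a nonzero polynomial, hence finite.
-/

open MeasureTheory MvPolynomial

theorem MeasureTheory.volume_preserving_finCons_swap {α : Type*} [MeasureSpace α]
    [SigmaFinite (volume : Measure α)] (k : ℕ) :
    MeasurePreserving (fun z : (Fin k → α) × α => (Fin.cons z.2 z.1 : Fin (k + 1) → α)) := by
  have hfun : (fun z : (Fin k → α) × α => (Fin.cons z.2 z.1 : Fin (k + 1) → α)) =
      (MeasurableEquiv.piFinSuccAbove (fun _ : Fin (k + 1) => α) 0).symm ∘ Prod.swap := by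
    ext z : 1
    simp [Fin.consEquiv]
  rw [hfun]
  exact (volume_preserving_piFinSuccAbove (fun _ : Fin (k + 1) => α) 0).symm.comp
    Measure.measurePreserving_swap

namespace MvPolynomial

theorem measurableSet_setOf_eval_eq_zero {ι : Type*} [Countable ι] (p : MvPolynomial ι ℝ) :
    MeasurableSet {x : ι → ℝ | eval x p = 0} :=
  (continuous_eval p).measurable (measurableSet_singleton 0)

theorem volume_setOf_eval_eq_zero_of_fin :
    ∀ {k : ℕ} {p : MvPolynomial (Fin k) ℝ}, p ≠ 0 → volume {x | eval x p = 0} = 0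
  | 0, p, hp => by
    obtain ⟨c, rfl⟩ := C_surjective (Fin 0) p
    have hc : c ≠ 0 := by simpa using hp
    simp [hc]
  | k + 1, p, hp => by
    set q := finSuccEquiv ℝ k p
    have hq : q.leadingCoeff ≠ 0 := by simpa [q] using hp
    have hcons := volume_preserving_finCons_swap (α := ℝ) k
    have hmeas := measurableSet_setOf_eval_eq_zero p
    rw [← hcons.measure_preimage hmeas.nullMeasurableSet]
    refine Measure.measure_prod_null_of_ae_null (hcons.measurable hmeas) ?_
    have hlc : ∀ᵐ x : Fin k → ℝ, eval x q.leadingCoeff ≠ 0 :=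
      measure_eq_zero_iff_ae_notMem.1 (volume_setOf_eval_eq_zero_of_fin hq)
    filter_upwards [hlc] with x hx
    have hmap : q.map (eval x) ≠ 0 := by
      rw [← Polynomial.leadingCoeff_ne_zero,
        Polynomial.leadingCoeff_map_of_leadingCoeff_ne_zero _ hx]
      exact hx
    have hslice : Prod.mk x ⁻¹' ((fun z : (Fin k → ℝ) × ℝ => (Fin.cons z.2 z.1 : Fin (k + 1) → ℝ))
        ⁻¹' {x | eval x p = 0}) = {y | (q.map (eval x)).IsRoot y} := by
      ext y
      simp [eval_eq_eval_mv_eval', q]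
    rw [hslice]
    exact (Polynomial.finite_setOfPred_isRoot hmap).measure_zero _

theorem volume_setOf_eval_eq_zero {ι : Type*} [Fintype ι] {p : MvPolynomial ι ℝ}
    (hp : p ≠ 0) : volume {x : ι → ℝ | eval x p = 0} = 0 := by
  let e := Fintype.equivFin ι
  have he := volume_preserving_arrowCongr' e (MeasurableEquiv.refl ℝ) (.id volume)
  rw [← he.symm.measure_preimage (measurableSet_setOf_eval_eq_zero p).nullMeasurableSet]
  convert volume_setOf_eval_eq_zero_of_fin ((rename_injective _ e.injective).ne_iff.2 hp) using 2
  ext x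
  simp [eval_rename, MeasurableEquiv.arrowCongr', Equiv.arrowCongr']
  rfl

end MvPolynomial

namespace Matrix

variable {m R : Type*} (S : m → m → Prop) [∀ i j, Decidable (S i j)]

def patternMatrix [Zero R] (v : m × m → R) : Matrix m m R :=
  of fun i j => if S i j then v (i, j) else 0

theorem map_patternMatrix {R' : Type*} [Zero R] [Zero R'] (v : m × m → R) {f : R → R'}
    (hf : f 0 = 0) : (patternMatrix S v).map f = patternMatrix S (f ∘ v) := by
  ext i j
  simp only [patternMatrix, map_apply, of_apply, Function.comp_apply]
  split_ifs <;> simp [hf]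

variable [Fintype m] [DecidableEq m] [CommRing R]

theorem eval_det_patternMatrix_X (v : m × m → R) :
    eval v (patternMatrix S (X : m × m → MvPolynomial (m × m) R)).det =
      (patternMatrix S v).det := by
  rw [RingHom.map_det, RingHom.mapMatrix_apply, map_patternMatrix S _ (map_zero _)]
  congr 2
  exact funext fun _ => MvPolynomial.eval_X _

theorem det_patternMatrix_X_ne_zero [Nontrivial R] {σ : Equiv.Perm m} (hσ : ∀ i, S i (σ i)) :
    (patternMatrix S (X : m × m → MvPolynomial (m × m) R)).det ≠ 0 := by
  let v : m × m → R := fun ij => if σ ij.1 = ij.2 then 1 else 0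
  have hperm : patternMatrix S v = σ.permMatrix R := by
    ext i j
    by_cases hj : σ i = j
    · subst hj
      simp [patternMatrix, v, hσ i]
    · simp [patternMatrix, v, hj, PEquiv.toMatrix_apply]
  refine ne_of_apply_ne (eval v) ?_
  rw [eval_det_patternMatrix_X, hperm, det_permutation, map_zero]
  exact ((Equiv.Perm.sign σ).isUnit.map (Int.castRingHom R)).ne_zero

end Matrix

/-- Structural nonsingularity is generically sufficient for numerical nonsingularity:
if the sparsity pattern `S` admits a perfect matching, then the set of entry
assignments making the resulting matrix singular is Lebesgue-null. -/
theorem singular_matrices_null_of_matching {n : ℕ}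
    (S : Fin n → Fin n → Prop) [∀ i j, Decidable (S i j)]
    (hS : ∃ σ : Equiv.Perm (Fin n), ∀ i, S i (σ i)) :
    volume {v : Fin n × Fin n → ℝ |
      (Matrix.of fun i j => if S i j then v (i, j) else 0).det = 0} = 0 := by
  obtain ⟨σ, hσ⟩ := hS
  have hnull := volume_setOf_eval_eq_zero (Matrix.det_patternMatrix_X_ne_zero (R := ℝ) S hσ)
  simp only [Matrix.eval_det_patternMatrix_X] at hnull
  exact hnull
end

section
/- Let x⁻, y⁻, ẋ⁻, ẏ⁻, x⁺, y⁺, ẋ⁺, ẏ⁺, λ̂ be real numbers satisfying the restart equations: x⁺ = x⁻, y⁺ = y⁻, ẋ⁺ − ẋ⁻ + λ̂·x⁻ = 0, and ẏ⁺ − ẏ⁻ + λ̂·y⁻ = 0. Then ẋ⁺·y⁺ − ẏ⁺·x⁺ = ẋ⁻·y⁻ − ẏ⁻·x⁻, i.e., the angular momentum is preserved across the mode change. -/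
/-- The restart system of the cup-and-ball preserves angular momentum across the
mode change. -/
theorem restart_preserves_angular_momentum
    (xm ym dxm dym xp yp dxp dyp lamh : ℝ)
    (h1 : xp = xm) (h2 : yp = ym)
    (h3 : dxp - dxm + lamh * xm = 0)
    (h4 : dyp - dym + lamh * ym = 0) :
    dxp * yp - dyp * xp = dxm * ym - dym * xm := by
  subst h1 h2
  -- The velocity jump `-lamh • (xp, yp)` is radial, so its cross product with the position vanishes.
  linear_combination yp * h3 - xp * h4
end

section
/- Let x⁻, y⁻, ẋ⁻, ẏ⁻ be real numbers with (x⁻, y⁻) ≠ (0, 0). Then there exists a unique tuple (x⁺, y⁺, ẋ⁺, ẏ⁺, λ̂) of real numbers satisfying the restart equations: x⁺ = x⁻, y⁺ = y⁻, ẋ⁺ − ẋ⁻ + λ̂·x⁻ = 0, ẏ⁺ − ẏ⁻ + λ̂·y⁻ = 0, and x⁻·ẋ⁺ + y⁻·ẏ⁺ = 0; moreover λ̂ = (x⁻·ẋ⁻ + y⁻·ẏ⁻)/((x⁻)² + (y⁻)²). -/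
/-! The velocity jump `v⁺ - v⁻ = -λ̂ q⁻` is along the rope `q⁻ = (x⁻, y⁻)`, and `v⁺ ⟂ q⁻`.
Pairing the jump equation with `q⁻` therefore gives `λ̂ ‖q⁻‖² = ⟪v⁻, q⁻⟫`, which determines `λ̂`
as soon as `q⁻ ≠ 0`, and then `v⁺ = v⁻ - λ̂ q⁻` is determined too. -/

theorem sq_add_sq_ne_zero_of_ne_zero {R : Type*} [CommRing R] [LinearOrder R]
    [IsStrictOrderedRing R] {a b : R} (h : (a, b) ≠ (0, 0)) : a ^ 2 + b ^ 2 ≠ 0 := by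
  intro h'
  rw [sq, sq, mul_self_add_mul_self_eq_zero] at h'
  exact h (Prod.ext h'.1 h'.2)

section RestartEquations

variable {K : Type*} [Field K] {x y dx dy dx' dy' l : K}

theorem tension_eq_of_restart (hq : x ^ 2 + y ^ 2 ≠ 0) (hx : dx' - dx + l * x = 0)
    (hy : dy' - dy + l * y = 0) (hperp : x * dx' + y * dy' = 0) :
    l = (x * dx + y * dy) / (x ^ 2 + y ^ 2) := by
  rw [eq_div_iff hq]
  linear_combination x * hx + y * hy - hperp

theorem restart_velocity_perp (hq : x ^ 2 + y ^ 2 ≠ 0) :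
    x * (dx - (x * dx + y * dy) / (x ^ 2 + y ^ 2) * x) +
      y * (dy - (x * dx + y * dy) / (x ^ 2 + y ^ 2) * y) = 0 := by
  field_simp
  ring

end RestartEquations

/-- Determinism of the cup-and-ball restart (Requirement 1.1): the restart system
uniquely determines the restart values and the rescaled tension `λ̂`, which equals
`(x⁻ ẋ⁻ + y⁻ ẏ⁻)/((x⁻)² + (y⁻)²)`. -/
theorem restart_is_deterministic (xm ym dxm dym : ℝ) (hne : (xm, ym) ≠ (0, 0)) :
    (∃! t : ℝ × ℝ × ℝ × ℝ × ℝ,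
        t.1 = xm ∧ t.2.1 = ym ∧
        t.2.2.1 - dxm + t.2.2.2.2 * xm = 0 ∧
        t.2.2.2.1 - dym + t.2.2.2.2 * ym = 0 ∧
        xm * t.2.2.1 + ym * t.2.2.2.1 = 0) ∧
    (∀ xp yp dxp dyp lamh : ℝ,
        xp = xm → yp = ym →
        dxp - dxm + lamh * xm = 0 →
        dyp - dym + lamh * ym = 0 →
        xm * dxp + ym * dyp = 0 →
        lamh = (xm * dxm + ym * dym) / (xm ^ 2 + ym ^ 2)) := by
  have hq := sq_add_sq_ne_zero_of_ne_zero hne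
  set l := (xm * dxm + ym * dym) / (xm ^ 2 + ym ^ 2)
  refine ⟨⟨(xm, ym, dxm - l * xm, dym - l * ym, l),
    ⟨rfl, rfl, by ring, by ring, restart_velocity_perp hq⟩, ?_⟩,
    fun _ _ _ _ _ _ _ hx hy hperp => tension_eq_of_restart hq hx hy hperp⟩
  rintro ⟨xp, yp, dxp, dyp, lamh⟩ ⟨hxp, hyp, hx, hy, hperp⟩
  obtain rfl : lamh = l := tension_eq_of_restart hq hx hy hperp
  simp only [Prod.mk.injEq, and_true]
  exact ⟨hxp, hyp, by linear_combination hx, by linear_combination hy⟩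
end
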